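/- arXiv:2402.12499 — 4 statements merged into one kernel-verified Lean document; each statement's English description precedes it below -/
import Mathlib

section
/- Let (E, d) be a complete metric space and γ ∈ [0, 1). Let U : E → E be Lipschitz with constant γ and let J* ∈ E be a fixed point of U (U J* = J*). Let S : E → E be Lipschitz with constant γ and let J_S ∈ E be a fixed point of S (S J_S = J_S). Suppose there exist J ∈ E and an integer ℓ ≥ 1 such that, setting Ĵ = U^{ℓ−1} J (the (ℓ−1)-fold iterate of U applied to J), one has S Ĵ = U Ĵ. Then d(J_S, J*) ≤ (2 γ^ℓ / (1 − γ)) · d(J, J*). -/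
/-!
Where `S` and `U` agree at `z`, passing through `S z = U z` and using both contractions shows
that `S` moves the fixed point `x` of `U` by at most `2γ · dist z x`; the fixed point of the
`γ`-contraction `S` lies within `1 / (1 - γ)` times that displacement of `x`. Taking
`z = U^[ℓ-1] J`, with `dist z J* ≤ γ^(ℓ-1) · dist J J*`, gives the factor `2γ^ℓ / (1 - γ)`.
-/

open Function
open scoped NNReal

theorem LipschitzWith.dist_iterate_le_of_isFixedPt {E : Type*} [PseudoMetricSpace E] {K : ℝ≥0}
    {f : E → E} (hf : LipschitzWith K f) {x : E} (hx : IsFixedPt f x) (n : ℕ) (z : E) :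
    dist (f^[n] z) x ≤ K ^ n * dist z x := by
  simpa [(hx.iterate n).eq] using (hf.iterate n).dist_le_mul z x

theorem dist_apply_le_of_apply_eq {E : Type*} [PseudoMetricSpace E] {K : ℝ≥0} {U S : E → E}
    (hU : LipschitzWith K U) (hS : LipschitzWith K S) {x z : E} (hx : IsFixedPt U x)
    (hz : S z = U z) : dist x (S x) ≤ 2 * K * dist z x :=
  calc dist x (S x) ≤ dist (U x) (U z) + dist (S z) (S x) := by
        rw [hx.eq, hz]; exact dist_triangle _ _ _
    _ ≤ K * dist x z + K * dist z x := add_le_add (hU.dist_le_mul _ _) (hS.dist_le_mul _ _)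
    _ = 2 * K * dist z x := by rw [dist_comm x z]; ring

theorem dist_isFixedPt_le_of_apply_eq {E : Type*} [MetricSpace E] {K : ℝ≥0} (hK : K < 1)
    {U S : E → E} (hU : LipschitzWith K U) (hS : LipschitzWith K S) {x y z : E}
    (hx : IsFixedPt U x) (hy : IsFixedPt S y) (hz : S z = U z) :
    dist y x ≤ 2 * K / (1 - K) * dist z x :=
  calc dist y x ≤ dist x (S x) / (1 - K) := by
        rw [dist_comm]; exact (show ContractingWith K S from ⟨hK, hS⟩).dist_le_of_fixedPoint x hy
    _ ≤ 2 * K * dist z x / (1 - K) := by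
        gcongr
        · exact sub_nonneg.2 (NNReal.coe_le_one.2 hK.le)
        · exact dist_apply_le_of_apply_eq hU hS hx hz
    _ = 2 * K / (1 - K) * dist z x := by ring

theorem rollout_performance_bound_general {E : Type*} [MetricSpace E]
    (γ : ℝ≥0) (hγ : γ < 1)
    (U S : E → E) (hU : LipschitzWith γ U) (hS : LipschitzWith γ S)
    (Jstar : E) (hJstar : U Jstar = Jstar)
    (JS : E) (hJS : S JS = JS)
    (J : E) (ℓ : ℕ) (hℓ : 1 ≤ ℓ)
    (hroll : S (U^[ℓ - 1] J) = U (U^[ℓ - 1] J)) :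
    dist JS Jstar ≤ (2 * (γ : ℝ) ^ ℓ / (1 - (γ : ℝ))) * dist J Jstar := by
  obtain ⟨k, rfl⟩ : ∃ k, ℓ = k + 1 := ⟨ℓ - 1, by omega⟩
  calc dist JS Jstar ≤ 2 * γ / (1 - γ) * dist (U^[k] J) Jstar :=
        dist_isFixedPt_le_of_apply_eq hγ hU hS hJstar hJS hroll
    _ ≤ 2 * γ / (1 - γ) * (γ ^ k * dist J Jstar) := by
        have : (γ : ℝ) < 1 := hγ
        gcongr
        exact hU.dist_iterate_le_of_isFixedPt hJstar k J
    _ = 2 * (γ : ℝ) ^ (k + 1) / (1 - γ) * dist J Jstar := by ring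

/-- Performance bound for rollout with lookahead (Thm. 3, eq. 15b), abstracted:
`U` is the optimal Bellman operator (a `γ`-contraction with fixed point `Jstar`),
`S` is the rollout-strategy operator (a `γ`-contraction with fixed point `JS`),
and `S` agrees with `U` on the `(ℓ-1)`-fold iterate of `U` applied to `J`. -/
theorem rollout_performance_bound {E : Type*} [MetricSpace E] [CompleteSpace E]
    (γ : ℝ≥0) (hγ : γ < 1)
    (U S : E → E) (hU : LipschitzWith γ U) (hS : LipschitzWith γ S)
    (Jstar : E) (hJstar : U Jstar = Jstar)
    (JS : E) (hJS : S JS = JS)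
    (J : E) (ℓ : ℕ) (hℓ : 1 ≤ ℓ)
    (hroll : S (U^[ℓ - 1] J) = U (U^[ℓ - 1] J)) :
    dist JS Jstar ≤ (2 * (γ : ℝ) ^ ℓ / (1 - (γ : ℝ))) * dist J Jstar :=
  rollout_performance_bound_general γ hγ U S hU hS Jstar hJstar JS hJS J ℓ hℓ hroll
end

section
/- Let L be a nonempty finite type, let μ₁ : L → ℝ be a probability vector with μ₁(ℓ) > 0 for all ℓ, and let M > 0. For each t ∈ ℕ let K_t : L → [0, M] satisfy min_ℓ K_t(ℓ) = 0, and let Z_t : L → ℝ satisfy max_ℓ |Z_t(ℓ) − K_t(ℓ)| ≤ η_t where η_t → 0 as t → ∞. Define μ_t(ℓ) = μ₁(ℓ) exp(−t Z_t(ℓ)) / (∑_{ℓ'} μ₁(ℓ') exp(−t Z_t(ℓ'))). Then ∑_ℓ K_t(ℓ) μ_t(ℓ) → 0 as t → ∞. -/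
/-!
Against a state `ℓ₀` with `K t ℓ₀ = 0`, the posterior weight of a state with `K t ℓ > δ` is at
most `(μ₁ ℓ / μ₁ ℓ₀) e^{-t (δ - 2 η t)}`, exponentially small once `η t < δ / 4`. With `C` a bound
on the prior ratios, splitting the expectation at level `δ` gives
`∑ K μ_t ≤ δ + |L| M C e^{-t δ / 2}`, which is below `2δ` for large `t`.
-/

open Filter Topology

section Gibbs

variable {L : Type*} [Fintype L]

noncomputable def gibbs (w : L → ℝ) (β : ℝ) (E : L → ℝ) (ℓ : L) : ℝ :=
  w ℓ * Real.exp (-β * E ℓ) / ∑ ℓ', w ℓ' * Real.exp (-β * E ℓ')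

variable {w : L → ℝ} {β : ℝ} {E : L → ℝ}

theorem gibbs_nonneg (hw : ∀ ℓ, 0 ≤ w ℓ) (ℓ : L) : 0 ≤ gibbs w β E ℓ :=
  div_nonneg (mul_nonneg (hw ℓ) (Real.exp_pos _).le)
    (Finset.sum_nonneg fun ℓ' _ => mul_nonneg (hw ℓ') (Real.exp_pos _).le)

theorem sum_gibbs [Nonempty L] (hw : ∀ ℓ, 0 < w ℓ) : ∑ ℓ, gibbs w β E ℓ = 1 := by
  have hD : 0 < ∑ ℓ', w ℓ' * Real.exp (-β * E ℓ') :=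
    Finset.sum_pos (fun ℓ _ => mul_pos (hw ℓ) (Real.exp_pos _)) Finset.univ_nonempty
  simp only [gibbs]
  rw [← Finset.sum_div, div_self hD.ne']

/-- Comparing with a single reference state `ℓ₀` bounds the normalising constant from below. -/
theorem gibbs_le_ratio_mul_exp (hw : ∀ ℓ, 0 ≤ w ℓ) {ℓ₀ : L} (hw₀ : 0 < w ℓ₀) (ℓ : L) :
    gibbs w β E ℓ ≤ w ℓ / w ℓ₀ * Real.exp (-β * (E ℓ - E ℓ₀)) := by
  have hD : w ℓ₀ * Real.exp (-β * E ℓ₀) ≤ ∑ ℓ', w ℓ' * Real.exp (-β * E ℓ') :=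
    Finset.single_le_sum (f := fun ℓ' => w ℓ' * Real.exp (-β * E ℓ'))
      (fun ℓ' _ => mul_nonneg (hw ℓ') (Real.exp_pos _).le) (Finset.mem_univ ℓ₀)
  calc gibbs w β E ℓ ≤ w ℓ * Real.exp (-β * E ℓ) / (w ℓ₀ * Real.exp (-β * E ℓ₀)) :=
        div_le_div_of_nonneg_left (mul_nonneg (hw ℓ) (Real.exp_pos _).le)
          (mul_pos hw₀ (Real.exp_pos _)) hD
    _ = w ℓ / w ℓ₀ * Real.exp (-β * (E ℓ - E ℓ₀)) := by
        rw [mul_sub, Real.exp_sub]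
        field_simp

theorem gibbs_le_ratio_mul_exp_of_abs_sub_le (hw : ∀ ℓ, 0 ≤ w ℓ) {K Z : L → ℝ} {η : ℝ}
    (hZK : ∀ ℓ, |Z ℓ - K ℓ| ≤ η) {ℓ₀ : L} (hw₀ : 0 < w ℓ₀) (hK₀ : K ℓ₀ = 0) (hβ : 0 ≤ β)
    (ℓ : L) : gibbs w β Z ℓ ≤ w ℓ / w ℓ₀ * Real.exp (-β * (K ℓ - 2 * η)) := by
  refine (gibbs_le_ratio_mul_exp hw hw₀ ℓ).trans
    (mul_le_mul_of_nonneg_left (Real.exp_le_exp.2 ?_) (div_nonneg (hw ℓ) hw₀.le))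
  have h := abs_le.mp (hZK ℓ)
  have h₀ := abs_le.mp (hZK ℓ₀)
  rw [hK₀] at h₀
  nlinarith [mul_nonneg hβ (show 0 ≤ Z ℓ - Z ℓ₀ - (K ℓ - 2 * η) by linarith)]

end Gibbs

theorem sum_mul_le_add_card_mul_of_tail_le {L : Type*} [Fintype L] {p f : L → ℝ} {δ M r : ℝ}
    (hp : ∀ ℓ, 0 ≤ p ℓ) (hp1 : ∑ ℓ, p ℓ = 1) (hfM : ∀ ℓ, f ℓ ≤ M) (hδ : 0 ≤ δ) (hM : 0 ≤ M)
    (hr : 0 ≤ r) (htail : ∀ ℓ, δ < f ℓ → p ℓ ≤ r) :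
    ∑ ℓ, f ℓ * p ℓ ≤ δ + Fintype.card L * (M * r) := by
  have hpoint : ∀ ℓ, f ℓ * p ℓ ≤ δ * p ℓ + M * r := by
    intro ℓ
    rcases le_or_gt (f ℓ) δ with hle | hlt
    · linarith [mul_le_mul_of_nonneg_right hle (hp ℓ), mul_nonneg hM hr]
    · linarith [mul_le_mul_of_nonneg_right (hfM ℓ) (hp ℓ),
        mul_le_mul_of_nonneg_left (htail ℓ hlt) hM, mul_nonneg hδ (hp ℓ)]
  calc ∑ ℓ, f ℓ * p ℓ ≤ ∑ ℓ, (δ * p ℓ + M * r) := Finset.sum_le_sum fun ℓ _ => hpoint ℓ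
    _ = δ + Fintype.card L * (M * r) := by
        rw [Finset.sum_add_distrib, ← Finset.mul_sum, hp1, Finset.sum_const, Finset.card_univ,
          nsmul_eq_mul, mul_one]

theorem posterior_expected_discrepancy_tendsto_zero_general {L : Type*} [Fintype L] [Nonempty L]
    (μ₁ : L → ℝ) (hμ₁ : ∀ ℓ, 0 < μ₁ ℓ)
    (M : ℝ)
    (K Z : ℕ → L → ℝ)
    (hK0 : ∀ t ℓ, 0 ≤ K t ℓ) (hKM : ∀ t ℓ, K t ℓ ≤ M)
    (hKmin : ∀ t, ∃ ℓ, K t ℓ = 0)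
    (η : ℕ → ℝ) (hZK : ∀ t ℓ, |Z t ℓ - K t ℓ| ≤ η t)
    (hη : Tendsto η atTop (nhds 0))
    (μ : ℕ → L → ℝ)
    (hμ : ∀ t ℓ, μ t ℓ =
      μ₁ ℓ * Real.exp (-(t : ℝ) * Z t ℓ) /
        ∑ ℓ', μ₁ ℓ' * Real.exp (-(t : ℝ) * Z t ℓ')) :
    Tendsto (fun t => ∑ ℓ, K t ℓ * μ t ℓ) atTop (nhds 0) := by
  obtain rfl : μ = fun t : ℕ => gibbs μ₁ t (Z t) := funext₂ hμ
  have hμ₁0 : ∀ ℓ, 0 ≤ μ₁ ℓ := fun ℓ => (hμ₁ ℓ).le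
  obtain ⟨C, hC⟩ := Finite.bddAbove_range fun p : L × L => μ₁ p.1 / μ₁ p.2
  have hC' : ∀ ℓ ℓ₀, μ₁ ℓ / μ₁ ℓ₀ ≤ C := fun ℓ ℓ₀ => hC ⟨(ℓ, ℓ₀), rfl⟩
  obtain ⟨a⟩ := ‹Nonempty L›
  have hC0 : 0 ≤ C := (div_nonneg (hμ₁0 a) (hμ₁0 a)).trans (hC' a a)
  have hM0 : 0 ≤ M := (hK0 0 a).trans (hKM 0 a)
  refine tendsto_order.2 ⟨fun b hb => Eventually.of_forall fun t => hb.trans_le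
    (Finset.sum_nonneg fun ℓ _ => mul_nonneg (hK0 t ℓ) (gibbs_nonneg hμ₁0 ℓ)), fun ε hε => ?_⟩
  set δ := ε / 2
  have hbound : Tendsto (fun t : ℕ => δ + Fintype.card L * (M * (C * Real.exp (-(t * (δ / 2))))))
      atTop (𝓝 δ) := by
    have h := Real.tendsto_exp_neg_atTop_nhds_zero.comp
      (tendsto_natCast_atTop_atTop.atTop_mul_const (by positivity : (0 : ℝ) < δ / 2))
    simpa using ((h.const_mul C).const_mul M |>.const_mul (Fintype.card L : ℝ)).const_add δ
  filter_upwards [hη.eventually (gt_mem_nhds (by positivity : (0 : ℝ) < δ / 4)),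
    hbound.eventually (gt_mem_nhds (half_lt_self hε))] with t hηt hlt
  obtain ⟨ℓ₀, hℓ₀⟩ := hKmin t
  have htail : ∀ ℓ, δ < K t ℓ → gibbs μ₁ t (Z t) ℓ ≤ C * Real.exp (-(t * (δ / 2))) := by
    intro ℓ hℓ
    refine (gibbs_le_ratio_mul_exp_of_abs_sub_le hμ₁0 (hZK t) (hμ₁ ℓ₀) hℓ₀ t.cast_nonneg ℓ).trans
      (mul_le_mul (hC' ℓ ℓ₀) (Real.exp_le_exp.2 ?_) (Real.exp_pos _).le hC0)
    nlinarith [(t.cast_nonneg : (0 : ℝ) ≤ t)]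
  exact (sum_mul_le_add_card_mul_of_tail_le (gibbs_nonneg hμ₁0) (sum_gibbs hμ₁) (hKM t)
    (by positivity) hM0 (by positivity) htail).trans_lt hlt

/-- Analytic core of Thm. 4.A: if the Gibbs-form posterior `μ t` is built from
`Z t` which converges uniformly to the excess discrepancy `K t` (bounded in
`[0, M]`, with minimum `0`), then the posterior-expected excess discrepancy
vanishes. -/
theorem posterior_expected_discrepancy_tendsto_zero {L : Type*} [Fintype L] [Nonempty L]
    (μ₁ : L → ℝ) (hμ₁ : ∀ ℓ, 0 < μ₁ ℓ) (hsum : ∑ ℓ, μ₁ ℓ = 1)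
    (M : ℝ) (hM : 0 < M)
    (K Z : ℕ → L → ℝ)
    (hK0 : ∀ t ℓ, 0 ≤ K t ℓ) (hKM : ∀ t ℓ, K t ℓ ≤ M)
    (hKmin : ∀ t, ∃ ℓ, K t ℓ = 0)
    (η : ℕ → ℝ) (hZK : ∀ t ℓ, |Z t ℓ - K t ℓ| ≤ η t)
    (hη : Tendsto η atTop (nhds 0))
    (μ : ℕ → L → ℝ)
    (hμ : ∀ t ℓ, μ t ℓ =
      μ₁ ℓ * Real.exp (-(t : ℝ) * Z t ℓ) /
        ∑ ℓ', μ₁ ℓ' * Real.exp (-(t : ℝ) * Z t ℓ')) :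
    Tendsto (fun t => ∑ ℓ, K t ℓ * μ t ℓ) atTop (nhds 0) :=
  posterior_expected_discrepancy_tendsto_zero_general μ₁ hμ₁ M K Z hK0 hKM hKmin η hZK hη μ hμ
end

section
/- Let Θ be a compact metric space, let ρ be a Borel probability measure on Θ with full support (ρ(U) > 0 for every nonempty open U ⊆ Θ), and let K : Θ → ℝ be continuous with K(θ) ≥ 0 for all θ and inf_{θ∈Θ} K(θ) = 0. For t > 0 define the probability measure ρ_t on Θ by ρ_t(A) = ∫_A exp(−t K(θ)) dρ(θ) / ∫_Θ exp(−t K(θ)) dρ(θ). Then ∫_Θ K(θ) dρ_t(θ) → 0 as t → ∞. -/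
/-!
Fix `δ > 0`. Pointwise, `x e^{-tx} ≤ 2δ e^{-tx} + (2/t) e^{-tδ}`, so the numerator is at most
`2δ Z_t + (2/t) e^{-tδ} ρ(Θ)`, where `Z_t = ∫ e^{-tK} dρ`. On the other hand `Z_t` is at least
`e^{-tδ} ρ{K < δ}`, and `ρ{K < δ} > 0` because this set is open and nonempty. The factors
`e^{-tδ}` cancel, so the posterior mean of `K` is at most `2δ + 2 ρ(Θ) / (t ρ{K < δ})`.
-/

open Filter MeasureTheory Real

noncomputable def gibbsMean {α : Type*} [MeasurableSpace α] (μ : Measure α) (f : α → ℝ) (t : ℝ) :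
    ℝ :=
  (∫ x, f x * exp (-t * f x) ∂μ) / ∫ x, exp (-t * f x) ∂μ

theorem mul_exp_neg_mul_le {t δ : ℝ} (ht : 0 < t) (hδ : 0 ≤ δ) (x : ℝ) :
    x * exp (-t * x) ≤ 2 * δ * exp (-t * x) + 2 / t * exp (-t * δ) := by
  rcases le_or_gt x (2 * δ) with hx | hx
  · have := mul_le_mul_of_nonneg_right hx (exp_pos (-t * x)).le
    have : 0 ≤ 2 / t * exp (-t * δ) := by positivity
    linarith
  · -- `t x / 2 ≤ exp (t x / 2)` trades the factor `x` for half of the exponential decay.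
    have hlin : x ≤ 2 / t * exp (t * x / 2) := by
      have := add_one_le_exp (t * x / 2)
      rw [div_mul_eq_mul_div, le_div_iff₀ ht]
      linarith
    calc x * exp (-t * x) ≤ 2 / t * exp (t * x / 2) * exp (-t * x) :=
          mul_le_mul_of_nonneg_right hlin (exp_pos _).le
      _ = 2 / t * exp (-t * x / 2) := by rw [mul_assoc, ← exp_add]; ring_nf
      _ ≤ 2 / t * exp (-t * δ) := by gcongr; nlinarith
      _ ≤ 2 * δ * exp (-t * x) + 2 / t * exp (-t * δ) := by
          have : 0 ≤ 2 * δ * exp (-t * x) := by positivity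
          linarith

section Gibbs

variable {α : Type*} [MeasurableSpace α] {μ : Measure α} {f : α → ℝ}

theorem gibbsMean_nonneg (hf0 : ∀ x, 0 ≤ f x) (t : ℝ) : 0 ≤ gibbsMean μ f t :=
  div_nonneg (integral_nonneg fun x => mul_nonneg (hf0 x) (exp_pos _).le)
    (integral_nonneg fun _ => (exp_pos _).le)

variable [IsFiniteMeasure μ]

theorem integrable_exp_neg_mul (hf : Measurable f) (hf0 : ∀ x, 0 ≤ f x) {t : ℝ} (ht : 0 ≤ t) :
    Integrable (fun x => exp (-t * f x)) μ := by
  refine .of_bound (by fun_prop) 1 (ae_of_all _ fun x => ?_)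
  rw [norm_of_nonneg (exp_pos _).le, exp_le_one_iff]
  nlinarith [hf0 x]

theorem integral_mul_exp_neg_mul_le (hf : Measurable f) (hf0 : ∀ x, 0 ≤ f x) {t δ : ℝ}
    (ht : 0 < t) (hδ : 0 ≤ δ) :
    ∫ x, f x * exp (-t * f x) ∂μ ≤
      2 * δ * ∫ x, exp (-t * f x) ∂μ + 2 / t * exp (-t * δ) * μ.real Set.univ := by
  have hint := integrable_exp_neg_mul (μ := μ) hf hf0 ht.le
  calc ∫ x, f x * exp (-t * f x) ∂μ
      ≤ ∫ x, (2 * δ * exp (-t * f x) + 2 / t * exp (-t * δ)) ∂μ :=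
        integral_mono_of_nonneg (ae_of_all _ fun x => mul_nonneg (hf0 x) (exp_pos _).le)
          ((hint.const_mul _).add (integrable_const _))
          (ae_of_all _ fun x => mul_exp_neg_mul_le ht hδ (f x))
    _ = 2 * δ * ∫ x, exp (-t * f x) ∂μ + 2 / t * exp (-t * δ) * μ.real Set.univ := by
        rw [integral_add (hint.const_mul _) (integrable_const _), integral_const_mul,
          integral_const, smul_eq_mul, mul_comm (μ.real _)]

theorem exp_neg_mul_mul_measureReal_le_integral (hf : Measurable f) (hf0 : ∀ x, 0 ≤ f x)
    {t : ℝ} (ht : 0 ≤ t) (δ : ℝ) :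
    exp (-t * δ) * μ.real {x | f x < δ} ≤ ∫ x, exp (-t * f x) ∂μ := by
  have hint := integrable_exp_neg_mul (μ := μ) hf hf0 ht
  calc exp (-t * δ) * μ.real {x | f x < δ} ≤ ∫ x in {x | f x < δ}, exp (-t * f x) ∂μ :=
        setIntegral_ge_of_const_le_real (measurableSet_lt hf measurable_const)
          (measure_ne_top _ _) (fun x (hx : f x < δ) => exp_le_exp.2 (by nlinarith))
          hint.integrableOn
    _ ≤ ∫ x, exp (-t * f x) ∂μ :=
        setIntegral_le_integral hint (ae_of_all _ fun _ => (exp_pos _).le)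

theorem gibbsMean_le (hf : Measurable f) (hf0 : ∀ x, 0 ≤ f x) {t δ : ℝ} (ht : 0 < t)
    (hδ : 0 ≤ δ) (hpos : 0 < μ.real {x | f x < δ}) :
    gibbsMean μ f t ≤ 2 * δ + 2 * μ.real Set.univ / (t * μ.real {x | f x < δ}) := by
  set Z := ∫ x, exp (-t * f x) ∂μ
  have hZ := exp_neg_mul_mul_measureReal_le_integral (μ := μ) hf hf0 ht.le δ
  have hZpos : 0 < Z := lt_of_lt_of_le (by positivity) hZ
  rw [gibbsMean, div_le_iff₀ hZpos]
  refine (integral_mul_exp_neg_mul_le hf hf0 ht hδ).trans ?_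
  rw [add_mul]
  gcongr 2 * δ * Z + ?_
  calc 2 / t * exp (-t * δ) * μ.real Set.univ
      = 2 * μ.real Set.univ / (t * μ.real {x | f x < δ}) *
          (exp (-t * δ) * μ.real {x | f x < δ}) := by field_simp
    _ ≤ 2 * μ.real Set.univ / (t * μ.real {x | f x < δ}) * Z := by gcongr

theorem tendsto_gibbsMean_atTop_zero (hf : Measurable f) (hf0 : ∀ x, 0 ≤ f x)
    (hpos : ∀ δ > 0, 0 < μ {x | f x < δ}) :
    Tendsto (gibbsMean μ f) atTop (nhds 0) := by
  refine tendsto_order.2 ⟨fun a ha => .of_forall fun t => ha.trans_le (gibbsMean_nonneg hf0 t),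
    fun ε hε => ?_⟩
  have hc : 0 < μ.real {x | f x < ε / 4} :=
    ENNReal.toReal_pos (hpos _ (by positivity)).ne' (measure_ne_top _ _)
  have htail : Tendsto (fun t => 2 * μ.real Set.univ / (t * μ.real {x | f x < ε / 4})) atTop
      (nhds 0) :=
    tendsto_const_nhds.div_atTop (tendsto_id.atTop_mul_const hc)
  filter_upwards [htail.eventually (gt_mem_nhds (half_pos hε)), eventually_gt_atTop 0]
    with t htail ht
  linarith [gibbsMean_le (μ := μ) hf hf0 ht (by positivity) hc]

end Gibbs

theorem gibbs_posterior_expectation_tendsto_zero_general {Θ : Type*} [MetricSpace Θ]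
    [MeasurableSpace Θ] [BorelSpace Θ]
    (ρ : Measure Θ) [IsProbabilityMeasure ρ]
    (hfull : ∀ U : Set Θ, IsOpen U → U.Nonempty → 0 < ρ U)
    (K : Θ → ℝ) (hKcont : Continuous K) (hK0 : ∀ θ, 0 ≤ K θ)
    (hKinf : ⨅ θ, K θ = 0) :
    Tendsto (fun t : ℝ =>
        (∫ θ, K θ * Real.exp (-t * K θ) ∂ρ) / (∫ θ, Real.exp (-t * K θ) ∂ρ))
      atTop (nhds 0) := by
  have := nonempty_of_isProbabilityMeasure ρ
  refine tendsto_gibbsMean_atTop_zero hKcont.measurable hK0 fun δ hδ => ?_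
  exact hfull _ (isOpen_lt hKcont continuous_const) (exists_lt_of_ciInf_lt (hKinf.trans_lt hδ))

/-- Analytic core of Thm. 4.B: for a full-support prior `ρ` on a compact metric
space and a continuous nonnegative discrepancy `K` with infimum `0`, the
Gibbs-posterior expectation of `K` vanishes as `t → ∞`. -/
theorem gibbs_posterior_expectation_tendsto_zero {Θ : Type*} [MetricSpace Θ]
    [CompactSpace Θ] [MeasurableSpace Θ] [BorelSpace Θ]
    (ρ : Measure Θ) [IsProbabilityMeasure ρ]
    (hfull : ∀ U : Set Θ, IsOpen U → U.Nonempty → 0 < ρ U)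
    (K : Θ → ℝ) (hKcont : Continuous K) (hK0 : ∀ θ, 0 ≤ K θ)
    (hKinf : ⨅ θ, K θ = 0) :
    Tendsto (fun t : ℝ =>
        (∫ θ, K θ * Real.exp (-t * K θ) ∂ρ) / (∫ θ, Real.exp (-t * K θ) ∂ρ))
      atTop (nhds 0) :=
  gibbs_posterior_expectation_tendsto_zero_general ρ hfull K hKcont hK0 hKinf
end

section
/- Let Θ and X be compact metric spaces with Θ nonempty, and let F : Θ × X → ℝ be continuous with F(θ, x) ≥ 0 for all (θ, x) and such that for every x ∈ X there exists θ ∈ Θ with F(θ, x) = 0. Let ρ be a Borel probability measure on Θ with full support (ρ(U) > 0 for every nonempty open U ⊆ Θ). Then for every m > 0 there exists r > 0 such that ρ({ θ ∈ Θ : F(θ, x) ≤ m }) ≥ r for all x ∈ X. -/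
/-!
Around a minimizer `(θ₀, x₀)` with `F (θ₀, x₀) = 0 < m`, continuity gives a box `U × V` on which
`F < m`; hence every sublevel set `{θ | F (θ, x) ≤ m}` with `x ∈ V` contains `U`, whose mass is
positive because `ρ` has full support. Finitely many such `V` cover the compact space `X`, and the
least of the corresponding masses is the uniform bound.
-/

open MeasureTheory Filter Topology
open scoped ENNReal

theorem IsCompact.exists_pos_forall_le_of_forall_eventually {X : Type*} [TopologicalSpace X]
    {s : Set X} (hs : IsCompact s) {g : X → ℝ≥0∞}
    (hg : ∀ x ∈ s, ∃ r, 0 < r ∧ ∀ᶠ y in 𝓝 x, r ≤ g y) :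
    ∃ r, 0 < r ∧ ∀ x ∈ s, r ≤ g x := by
  refine hs.induction_on (p := fun t => ∃ r, 0 < r ∧ ∀ x ∈ t, r ≤ g x)
    ⟨1, one_pos, by simp⟩ ?_ ?_ ?_
  · exact fun t u htu ⟨r, hr, hu⟩ => ⟨r, hr, fun x hx => hu x (htu hx)⟩
  · rintro t u ⟨r, hr, ht⟩ ⟨r', hr', hu⟩
    refine ⟨min r r', lt_min hr hr', fun x hx => hx.elim ?_ ?_⟩
    · exact fun hx => (min_le_left _ _).trans (ht x hx)
    · exact fun hx => (min_le_right _ _).trans (hu x hx)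
  · intro x hx
    obtain ⟨r, hr, hle⟩ := hg x hx
    exact ⟨{y | r ≤ g y}, mem_nhdsWithin_of_mem_nhds hle, r, hr, fun _ hy => hy⟩

theorem MeasureTheory.Measure.exists_pos_eventually_le_measure_slice {Θ X : Type*}
    [TopologicalSpace Θ] [TopologicalSpace X] [MeasurableSpace Θ] (ρ : Measure Θ)
    [ρ.IsOpenPosMeasure] {S : Set (Θ × X)} {θ₀ : Θ} {x₀ : X} (hS : S ∈ 𝓝 (θ₀, x₀)) :
    ∃ r, 0 < r ∧ ∀ᶠ x in 𝓝 x₀, r ≤ ρ {θ | (θ, x) ∈ S} := by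
  obtain ⟨U, hU, V, hV, hUV⟩ := mem_nhds_prod_iff.mp hS
  refine ⟨ρ U, ρ.measure_pos_of_mem_nhds hU, ?_⟩
  filter_upwards [hV] with x hx
  exact measure_mono fun θ hθ => hUV ⟨hθ, hx⟩

theorem uniform_prior_mass_of_sublevel_sets_general {Θ X : Type*}
    [MetricSpace Θ]
    [MetricSpace X] [CompactSpace X]
    [MeasurableSpace Θ]
    (F : Θ × X → ℝ) (hF : Continuous F)
    (hmin : ∀ x, ∃ θ, F (θ, x) = 0)
    (ρ : Measure Θ)
    (hfull : ∀ U : Set Θ, IsOpen U → U.Nonempty → 0 < ρ U) :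
    ∀ m : ℝ, 0 < m → ∃ r : ℝ≥0∞, 0 < r ∧
      ∀ x : X, r ≤ ρ {θ : Θ | F (θ, x) ≤ m} := by
  intro m hm
  have : ρ.IsOpenPosMeasure := ⟨fun U hU hne => (hfull U hU hne).ne'⟩
  obtain ⟨r, hr, hle⟩ := isCompact_univ.exists_pos_forall_le_of_forall_eventually
    (g := fun x => ρ {θ : Θ | F (θ, x) ≤ m}) fun x _ => by
      obtain ⟨θ, hθ⟩ := hmin x
      have hsub : {p | F p ≤ m} ∈ 𝓝 (θ, x) :=
        hF.continuousAt.eventually (eventually_le_nhds (hθ ▸ hm))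
      exact ρ.exists_pos_eventually_le_measure_slice hsub
  exact ⟨r, hr, fun x => hle x trivial⟩

/-- Final step of Thm. 4.B: a uniform positive lower bound on the prior mass of
the near-optimal sublevel sets of a jointly continuous nonnegative discrepancy
that vanishes at a minimizer for every `x`. -/
theorem uniform_prior_mass_of_sublevel_sets {Θ X : Type*}
    [MetricSpace Θ] [CompactSpace Θ] [Nonempty Θ]
    [MetricSpace X] [CompactSpace X]
    [MeasurableSpace Θ] [BorelSpace Θ]
    (F : Θ × X → ℝ) (hF : Continuous F) (hF0 : ∀ p, 0 ≤ F p)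
    (hmin : ∀ x, ∃ θ, F (θ, x) = 0)
    (ρ : Measure Θ) [IsProbabilityMeasure ρ]
    (hfull : ∀ U : Set Θ, IsOpen U → U.Nonempty → 0 < ρ U) :
    ∀ m : ℝ, 0 < m → ∃ r : ℝ≥0∞, 0 < r ∧
      ∀ x : X, r ≤ ρ {θ : Θ | F (θ, x) ≤ m} :=
  uniform_prior_mass_of_sublevel_sets_general F hF hmin ρ hfull
end
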